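/- Let q, t be formal variables and fix r ≥ 2. For a partition λ define N_λ = ∏_{□∈λ, r | h_λ(□)} (1 − q^{a_λ(□)+1} t^{−l_λ(□)}) (1 − q^{−a_λ(□)} t^{l_λ(□)+1}). Then for any addable corner ■ of λ of color i one has the cancellation identity (N_{λ∪■}/N_λ) · ∏_{□∈R_i(λ∪■)} (1 − q t χ_□/χ_■) / ∏_{□∈A_i(λ∪■)} (1 − χ_□/χ_■) = ∏_{□∈A_i(λ)} (1 − q t χ_■/χ_□) / ∏_{□∈R_i(λ)} (1 − χ_■/χ_□), as an identity of rational functions in q, t. -/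

import Mathlib

open MvPolynomial

/-- The field of rational functions in `q` and `t`. -/
abbrev QT : Type := FractionRing (MvPolynomial (Fin 2) ℚ)

noncomputable def q : QT := algebraMap (MvPolynomial (Fin 2) ℚ) QT (X 0)
noncomputable def t : QT := algebraMap (MvPolynomial (Fin 2) ℚ) QT (X 1)

/-- The character of a cell `(row, column)`: `χ = q^column * t^row`. -/
noncomputable def chi (c : ℕ × ℕ) : QT := q ^ c.2 * t ^ c.1

/-- The color of a cell `(row, column)`: its content `row - column` mod `r`. -/
def cellColor (r : ℕ) (c : ℕ × ℕ) : ZMod r := (((c.1 : ℤ) - (c.2 : ℤ) : ℤ) : ZMod r)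

def IsAddable (μ : YoungDiagram) (c : ℕ × ℕ) : Prop :=
  c ∉ μ ∧ IsLowerSet (insert c (μ.cells : Set (ℕ × ℕ)))

def IsRemovable (μ : YoungDiagram) (c : ℕ × ℕ) : Prop :=
  c ∈ μ ∧ IsLowerSet ((μ.cells : Set (ℕ × ℕ)) \ {c})

/-- Arm length of a cell. -/
def arm (μ : YoungDiagram) (c : ℕ × ℕ) : ℕ := μ.rowLen c.1 - (c.2 + 1)

/-- Leg length of a cell. -/
def leg (μ : YoungDiagram) (c : ℕ × ℕ) : ℕ := μ.colLen c.2 - (c.1 + 1)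

/-- Hook length of a cell. -/
def hook (μ : YoungDiagram) (c : ℕ × ℕ) : ℕ := arm μ c + leg μ c + 1

/-- `N_λ = ∏_{□∈λ, r | h(□)} (1 - q^{a+1} t^{-l})(1 - q^{-a} t^{l+1})`. -/
noncomputable def normN (r : ℕ) (μ : YoungDiagram) : QT :=
  ∏ c ∈ μ.cells.filter (fun c => r ∣ hook μ c),
    (1 - q ^ (arm μ c + 1) * t ^ (-(leg μ c : ℤ))) *
      (1 - q ^ (-(arm μ c : ℤ)) * t ^ (leg μ c + 1))


/-!
Write `b = (x, y)` and `μ = λ ∪ {b}`. Only the cells in row `x` and column `y` change their hooks,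
and the hook factor of such a cell `□` is `pairFactor χ_b χ_d` for a cell `d` read off the boundary
of `λ`: for `□ = (x, j)`, `d` is the cell just below column `j` when `□` is read in `μ`, and the
diagonal successor of the last cell of column `j` when it is read in `λ` (symmetrically for
`□ = (k, y)` and row `k`). Moreover `r ∣ h(□)` exactly when `d` has the colour of `b`. Walking
along the columns left of `b` (and the rows above it), wherever the length does not drop the first
kind of term of one column is the second kind of the previous one, so `N_μ / N_λ` telescopes to a
product over the addable and the removable cells of `λ`, which is the identity.
Since adjacent cells have different colours when `r ≠ 1`, the cell `b` is the only difference
between the colour-`i` corners of `λ` and of `μ`.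
-/

lemma finprod_mem_ite {α M : Type*} [CommMonoid M] (s : Set α) (p : α → Prop) [DecidablePred p]
    (f : α → M) : ∏ᶠ c ∈ s, (if p c then f c else 1) = ∏ᶠ c ∈ {c | c ∈ s ∧ p c}, f c := by
  rw [finprod_mem_def, finprod_mem_def]
  congr 1
  ext c
  by_cases hc : c ∈ s <;> by_cases hp : p c <;> simp [hc, hp]

/-- Where `h` does not drop, `G j (h j) = G j (h (j - 1))` is the previous term of the second
product on the right, so only the terms at the drops survive; the last factor on the left makes up
for a last step without a drop. -/
theorem prod_range_mul_prod_range_ite_eq {M : Type*} [CommMonoid M] (G : ℕ → ℕ → M)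
    {h : ℕ → ℕ} (hh : Antitone h) (y : ℕ) :
    (∏ j ∈ Finset.range y, G j (h j)) *
        (∏ j ∈ Finset.range y, if h (j + 1) < h j then G (j + 1) (h j) else 1) *
        (if y = 0 ∨ h y < h (y - 1) then 1 else G y (h y)) =
      (∏ j ∈ Finset.range y, if j = 0 ∨ h j < h (j - 1) then G j (h j) else 1) *
        ∏ j ∈ Finset.range y, G (j + 1) (h j) := by
  induction y with
  | zero => simp
  | succ y ih =>
    simp only [Finset.prod_range_succ, Nat.add_one_ne_zero, false_or, Nat.add_sub_cancel]
    by_cases hdrop : h (y + 1) < h y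
    · simp only [if_pos hdrop, mul_one]
      grind
    · have hflat : h (y + 1) = h y := le_antisymm (hh (Nat.le_succ y)) (not_lt.mp hdrop)
      rw [if_neg hdrop, if_neg hdrop, hflat, mul_one]
      grind

lemma q_ne_zero : q ≠ 0 :=
  (map_ne_zero_iff _ (IsFractionRing.injective _ _)).mpr (X_ne_zero 0)

lemma t_ne_zero : t ≠ 0 :=
  (map_ne_zero_iff _ (IsFractionRing.injective _ _)).mpr (X_ne_zero 1)

lemma chi_ne_zero (c : ℕ × ℕ) : chi c ≠ 0 :=
  mul_ne_zero (pow_ne_zero _ q_ne_zero) (pow_ne_zero _ t_ne_zero)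

lemma chi_eq_algebraMap_monomial (c : ℕ × ℕ) :
    chi c = algebraMap (MvPolynomial (Fin 2) ℚ) QT
      (monomial (Finsupp.single 0 c.2 + Finsupp.single 1 c.1) 1) := by
  rw [← mul_one (1 : ℚ), ← monomial_mul, ← X_pow_eq_monomial, ← X_pow_eq_monomial, map_mul,
    map_pow, map_pow, chi, q, t]

lemma chi_injective : Function.Injective chi := by
  intro c d h
  simp only [chi_eq_algebraMap_monomial] at h
  have h' := monomial_left_injective one_ne_zero (IsFractionRing.injective _ _ h)
  exact Prod.ext (by simpa using congrArg (· 1) h') (by simpa using congrArg (· 0) h')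

lemma chi_add_one_add_one (c : ℕ × ℕ) : chi (c.1 + 1, c.2 + 1) = q * t * chi c := by
  simp only [chi]
  ring

lemma one_sub_chi_div_ne_zero {b c : ℕ × ℕ} (h : c ≠ b) : 1 - chi c / chi b ≠ 0 := by
  rw [sub_ne_zero, ne_comm, ne_eq, div_eq_one_iff_eq (chi_ne_zero b)]
  exact chi_injective.ne h

noncomputable def pairFactor (u v : QT) : QT := (1 - q * t * u / v) * (1 - v / u)

lemma pairFactor_qt_mul (u w : QT) : pairFactor u (q * t * w) = pairFactor w u := by
  rw [pairFactor, pairFactor, mul_comm, mul_div_mul_left _ _ (mul_ne_zero q_ne_zero t_ne_zero)]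

lemma pairFactor_chi_ne_zero {b d : ℕ × ℕ} (hb : d ≠ b) (hb' : d ≠ (b.1 + 1, b.2 + 1)) :
    pairFactor (chi b) (chi d) ≠ 0 := by
  refine mul_ne_zero ?_ (one_sub_chi_div_ne_zero hb)
  rw [← chi_add_one_add_one]
  exact one_sub_chi_div_ne_zero hb'.symm

lemma cellColor_eq_iff {r : ℕ} {c d : ℕ × ℕ} :
    cellColor r c = cellColor r d ↔ (r : ℤ) ∣ ((d.1 : ℤ) - d.2) - ((c.1 : ℤ) - c.2) :=
  ZMod.intCast_eq_intCast_iff_dvd_sub _ _ _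

lemma cellColor_add_one_add_one (r : ℕ) (c : ℕ × ℕ) :
    cellColor r (c.1 + 1, c.2 + 1) = cellColor r c := by
  simp only [cellColor]
  push_cast
  ring_nf

lemma cellColor_add_one_fst_ne {r : ℕ} (hr : r ≠ 1) (a j : ℕ) :
    cellColor r (a + 1, j) ≠ cellColor r (a, j) := by
  rw [Ne, cellColor_eq_iff]
  push_cast
  rw [show (a : ℤ) - j - (a + 1 - j) = -1 by ring, dvd_neg]
  exact_mod_cast mt Nat.dvd_one.mp hr

lemma cellColor_add_one_snd_ne {r : ℕ} (hr : r ≠ 1) (a j : ℕ) :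
    cellColor r (a, j + 1) ≠ cellColor r (a, j) := by
  rw [Ne, cellColor_eq_iff]
  push_cast
  rw [show (a : ℤ) - j - (a - (j + 1)) = 1 by ring]
  exact_mod_cast mt Nat.dvd_one.mp hr

lemma exists_between_of_cellColor_eq {r : ℕ} (hr : r ≠ 1) {b c : ℕ × ℕ} (hbc : b < c)
    (hcol : cellColor r b = cellColor r c) : ∃ d, b < d ∧ d < c := by
  obtain ⟨d, hbd, hdc, hd⟩ : ∃ d, b < d ∧ d ≤ c ∧ cellColor r d ≠ cellColor r b := by
    obtain ⟨b1, b2⟩ := b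
    by_cases h : b1 < c.1
    · refine ⟨(b1 + 1, b2), ?_, ?_, cellColor_add_one_fst_ne hr b1 b2⟩ <;>
        simp only [Prod.lt_iff, Prod.le_def] at hbc ⊢ <;> omega
    · refine ⟨(b1, b2 + 1), ?_, ?_, cellColor_add_one_snd_ne hr b1 b2⟩ <;>
        simp only [Prod.lt_iff, Prod.le_def] at hbc ⊢ <;> omega
  exact ⟨d, hbd, hdc.lt_of_ne fun h => hd (h ▸ hcol.symm)⟩

lemma isAddable_iff_forall_lt {μ : YoungDiagram} {c : ℕ × ℕ} :
    IsAddable μ c ↔ c ∉ μ ∧ ∀ d < c, d ∈ μ := by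
  refine and_congr_right fun _ => ⟨fun h d hd => ?_, fun h a d hda ha => ?_⟩
  · obtain rfl | hd' := h hd.le (Set.mem_insert c _)
    · exact absurd hd (lt_irrefl _)
    · exact hd'
  · obtain rfl | ha := ha
    · obtain hda | rfl := hda.lt_or_eq
      · exact Or.inr (h d hda)
      · exact Or.inl rfl
    · exact Or.inr (μ.isLowerSet hda ha)

lemma isRemovable_iff_forall_gt {μ : YoungDiagram} {c : ℕ × ℕ} :
    IsRemovable μ c ↔ c ∈ μ ∧ ∀ d, c < d → d ∉ μ := by
  refine and_congr_right fun _ => ⟨fun h d hcd hd => ?_, fun h a d hda ha => ?_⟩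
  · exact (h hcd.le ⟨hd, hcd.ne'⟩).2 rfl
  · refine ⟨μ.isLowerSet hda ha.1, fun hdc => ?_⟩
    rw [Set.mem_singleton_iff.mp hdc] at hda
    exact h a (hda.lt_of_ne fun hca => ha.2 hca.symm) ha.1

lemma isAddable_transpose {μ : YoungDiagram} {c : ℕ × ℕ} :
    IsAddable μ.transpose c ↔ IsAddable μ c.swap := by
  simp only [isAddable_iff_forall_lt, YoungDiagram.mem_transpose]
  refine and_congr_right fun _ =>
    ⟨fun h d hd => ?_, fun h d hd => h d.swap (Prod.swap_lt_swap.mpr hd)⟩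
  simpa using h d.swap (by simpa using Prod.swap_lt_swap.mpr hd)

lemma isRemovable_transpose {μ : YoungDiagram} {c : ℕ × ℕ} :
    IsRemovable μ.transpose c ↔ IsRemovable μ c.swap := by
  simp only [isRemovable_iff_forall_gt, YoungDiagram.mem_transpose]
  refine and_congr_right fun _ =>
    ⟨fun h d hd => ?_, fun h d hd => h d.swap (Prod.swap_lt_swap.mpr hd)⟩
  simpa using h d.swap (by simpa using Prod.swap_lt_swap.mpr hd)

lemma isAddable_iff_colLen {μ : YoungDiagram} {a j : ℕ} :
    IsAddable μ (a, j) ↔ a = μ.colLen j ∧ (j = 0 ∨ μ.colLen j < μ.colLen (j - 1)) := by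
  rw [isAddable_iff_forall_lt, YoungDiagram.mem_iff_lt_colLen, not_lt]
  constructor
  · rintro ⟨ha, h⟩
    have hup : a ≤ μ.colLen j := by
      rcases Nat.eq_zero_or_pos a with h0 | h0
      · omega
      · have := YoungDiagram.mem_iff_lt_colLen.mp
          (h (a - 1, j) (Prod.mk_lt_mk_iff_left.mpr (by omega)))
        omega
    refine ⟨le_antisymm hup ha, ?_⟩
    rcases Nat.eq_zero_or_pos j with h0 | h0
    · exact Or.inl h0
    · have := YoungDiagram.mem_iff_lt_colLen.mp
        (h (a, j - 1) (Prod.mk_lt_mk_iff_right.mpr (by omega)))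
      omega
  · rintro ⟨rfl, h⟩
    refine ⟨le_rfl, fun ⟨d1, d2⟩ hd => YoungDiagram.mem_iff_lt_colLen.mpr ?_⟩
    simp only [Prod.lt_iff] at hd
    rcases eq_or_ne d2 j with rfl | h2
    · omega
    · have := μ.colLen_anti d2 (j - 1) (by omega)
      omega

lemma isAddable_iff_rowLen {μ : YoungDiagram} {a j : ℕ} :
    IsAddable μ (a, j) ↔ j = μ.rowLen a ∧ (a = 0 ∨ μ.rowLen a < μ.rowLen (a - 1)) := by
  simpa [isAddable_transpose, YoungDiagram.colLen_transpose] using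
    isAddable_iff_colLen (μ := μ.transpose) (a := j) (j := a)

lemma isRemovable_iff_colLen {μ : YoungDiagram} {a j : ℕ} :
    IsRemovable μ (a, j) ↔ a + 1 = μ.colLen j ∧ μ.colLen (j + 1) < μ.colLen j := by
  rw [isRemovable_iff_forall_gt, YoungDiagram.mem_iff_lt_colLen]
  constructor
  · rintro ⟨ha, h⟩
    have h1 := h (a + 1, j) (Prod.mk_lt_mk_iff_left.mpr (Nat.lt_succ_self a))
    have h2 := h (a, j + 1) (Prod.mk_lt_mk_iff_right.mpr (Nat.lt_succ_self j))
    rw [YoungDiagram.mem_iff_lt_colLen] at h1 h2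
    omega
  · rintro ⟨ha, h⟩
    refine ⟨by omega, fun ⟨d1, d2⟩ hd => ?_⟩
    rw [YoungDiagram.mem_iff_lt_colLen]
    simp only [Prod.lt_iff] at hd
    rcases eq_or_ne d2 j with rfl | h2
    · omega
    · have := μ.colLen_anti (j + 1) d2 (by omega)
      omega

lemma setOf_isAddable_finite (μ : YoungDiagram) : {c | IsAddable μ c}.Finite :=
  (Set.finite_Iic (μ.colLen 0, μ.rowLen 0)).subset fun ⟨a, j⟩ hc => by
    have h1 := (isAddable_iff_colLen.mp hc).1
    have h2 := (isAddable_iff_rowLen.mp hc).1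
    exact ⟨h1 ▸ μ.colLen_anti 0 j (Nat.zero_le _), h2 ▸ μ.rowLen_anti 0 a (Nat.zero_le _)⟩

lemma setOf_isRemovable_finite (μ : YoungDiagram) : {c | IsRemovable μ c}.Finite :=
  μ.cells.finite_toSet.subset fun _ hc => hc.1

lemma lt_colLen_of_isAddable {lam : YoungDiagram} {x y j : ℕ} (hb : IsAddable lam (x, y))
    (hj : j < y) : x < lam.colLen j :=
  YoungDiagram.mem_iff_lt_colLen.mp ((isAddable_iff_forall_lt.mp hb).2 (x, j) (by simpa))

lemma lt_rowLen_of_isAddable {lam : YoungDiagram} {x y k : ℕ} (hb : IsAddable lam (x, y))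
    (hk : k < x) : y < lam.rowLen k :=
  YoungDiagram.mem_iff_lt_rowLen.mp ((isAddable_iff_forall_lt.mp hb).2 (k, y) (by simpa))

open Finset in
lemma prod_cells_eq_prod_row_mul_prod_col {M : Type*} [CommMonoid M] {lam : YoungDiagram}
    {x y : ℕ} (hb : IsAddable lam (x, y)) (g : ℕ × ℕ → M) :
    ∏ c ∈ lam.cells, g c = (∏ j ∈ range y, g (x, j)) * (∏ k ∈ range x, g (k, y)) *
      ∏ c ∈ lam.cells with ¬(c.1 = x ∨ c.2 = y), g c := by
  have hdisj : Disjoint (lam.row x) (lam.col y) := by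
    refine disjoint_left.mpr fun c hrow hcol => hb.1 ?_
    rw [YoungDiagram.mem_row_iff] at hrow
    rw [YoungDiagram.mem_col_iff] at hcol
    simpa [← hrow.2, ← hcol.2] using hrow.1
  rw [← prod_filter_mul_prod_filter_not lam.cells (fun c => c.1 = x ∨ c.2 = y), filter_or]
  change (∏ c ∈ lam.row x ∪ lam.col y, g c) * _ = _
  rw [prod_union hdisj, YoungDiagram.row_eq_prod, YoungDiagram.col_eq_prod,
    ← (isAddable_iff_rowLen.mp hb).1, ← (isAddable_iff_colLen.mp hb).1, prod_product,
    prod_product]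
  simp

lemma finprod_isRemovable_eq {M : Type*} [CommMonoid M] {lam : YoungDiagram} {x y : ℕ}
    (hb : IsAddable lam (x, y)) (f : ℕ × ℕ → M) :
    ∏ᶠ c ∈ {c | IsRemovable lam c}, f c =
      (∏ᶠ c ∈ {c | IsRemovable lam c ∧ c.2 < y}, f c) *
        ∏ᶠ c ∈ {c | IsRemovable lam c ∧ c.1 < x}, f c := by
  have hsplit : {c | IsRemovable lam c} =
      {c | IsRemovable lam c ∧ c.2 < y} ∪ {c | IsRemovable lam c ∧ c.1 < x} := by
    ext ⟨a, j⟩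
    simp only [Set.mem_ofPred_eq, Set.mem_union, ← and_or_left, iff_self_and]
    intro hc
    by_contra! h
    exact hb.1 (lam.isLowerSet (Prod.mk_le_mk.mpr ⟨h.2, h.1⟩) hc.1)
  have hdisj : Disjoint {c | IsRemovable lam c ∧ c.2 < y} {c | IsRemovable lam c ∧ c.1 < x} := by
    refine Set.disjoint_left.mpr fun ⟨a, j⟩ ⟨hc, hj⟩ ⟨_, ha⟩ => ?_
    refine (isRemovable_iff_forall_gt.mp hc).2 (a + 1, j)
      (Prod.mk_lt_mk_iff_left.mpr (Nat.lt_succ_self a)) ((isAddable_iff_forall_lt.mp hb).2 _ ?_)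
    simp only [Prod.lt_iff] at hj ha ⊢
    omega
  have hfin := setOf_isRemovable_finite lam
  rw [hsplit, finprod_mem_union hdisj (hfin.subset fun _ h => h.1) (hfin.subset fun _ h => h.1)]

lemma finprod_isAddable_sdiff_eq {M : Type*} [CommMonoid M] {lam : YoungDiagram} {x y : ℕ}
    (hb : IsAddable lam (x, y)) (f : ℕ × ℕ → M) :
    ∏ᶠ c ∈ {c | IsAddable lam c} \ {(x, y)}, f c =
      (∏ᶠ c ∈ {c | IsAddable lam c ∧ c.2 < y}, f c) *
        ∏ᶠ c ∈ {c | IsAddable lam c ∧ c.1 < x}, f c := by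
  have hbelow := (isAddable_iff_forall_lt.mp hb).2
  have hsplit : {c | IsAddable lam c} \ {(x, y)} =
      {c | IsAddable lam c ∧ c.2 < y} ∪ {c | IsAddable lam c ∧ c.1 < x} := by
    ext ⟨a, j⟩
    simp only [Set.mem_sdiff, Set.mem_ofPred_eq, Set.mem_singleton_iff, Set.mem_union,
      ← and_or_left, Prod.mk.injEq]
    refine and_congr_right fun hc => ⟨fun hne => ?_, by omega⟩
    by_contra! h
    refine hb.1 ((isAddable_iff_forall_lt.mp hc).2 _ (lt_of_le_of_ne ?_ fun h' => hne ?_))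
    · exact Prod.mk_le_mk.mpr ⟨h.2, h.1⟩
    · simpa using h'.symm
  have hdisj : Disjoint {c | IsAddable lam c ∧ c.2 < y} {c | IsAddable lam c ∧ c.1 < x} := by
    refine Set.disjoint_left.mpr fun ⟨a, j⟩ ⟨hc, hj⟩ ⟨_, ha⟩ => hc.1 (hbelow _ ?_)
    simp only [Prod.lt_iff] at hj ha ⊢
    omega
  have hfin := setOf_isAddable_finite lam
  rw [hsplit, finprod_mem_union hdisj (hfin.subset fun _ h => h.1) (hfin.subset fun _ h => h.1)]

open Finset in
theorem prod_colLen_mul_finprod_isRemovable {M : Type*} [CommMonoid M] (μ : YoungDiagram)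
    {y : ℕ} (hy : IsAddable μ (μ.colLen y, y)) (T : ℕ × ℕ → M) :
    (∏ j ∈ range y, T (μ.colLen j, j)) *
        ∏ᶠ c ∈ {c | IsRemovable μ c ∧ c.2 < y}, T (c.1 + 1, c.2 + 1) =
      (∏ᶠ c ∈ {c | IsAddable μ c ∧ c.2 < y}, T c) * ∏ j ∈ range y, T (μ.colLen j, j + 1) := by
  have hA : {c | IsAddable μ c ∧ c.2 < y} = (fun j => (μ.colLen j, j)) ''
      ↑((range y).filter fun j => j = 0 ∨ μ.colLen j < μ.colLen (j - 1)) := by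
    ext ⟨a, j⟩
    simp only [Set.mem_ofPred_eq, isAddable_iff_colLen, coe_filter, mem_range, Set.mem_image,
      Prod.mk.injEq]
    grind
  have hR : {c | IsRemovable μ c ∧ c.2 < y} = (fun j => (μ.colLen j - 1, j)) ''
      ↑((range y).filter fun j => μ.colLen (j + 1) < μ.colLen j) := by
    ext ⟨a, j⟩
    simp only [Set.mem_ofPred_eq, isRemovable_iff_colLen, coe_filter, mem_range, Set.mem_image,
      Prod.mk.injEq]
    grind
  have hinj (f : ℕ → ℕ) (s : Set ℕ) : s.InjOn fun j => (f j, j) :=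
    fun _ _ _ _ h => (Prod.mk.inj h).2
  rw [hA, hR, finprod_mem_image (hinj _ _), finprod_mem_image (hinj _ _),
    finprod_mem_coe_finset, finprod_mem_coe_finset, prod_filter, prod_filter]
  have key := prod_range_mul_prod_range_ite_eq (fun j v => T (v, j))
    (fun _ _ hj => μ.colLen_anti _ _ hj) y
  rw [if_pos (isAddable_iff_colLen.mp hy).2, mul_one] at key
  convert key using 2
  refine prod_congr rfl fun j _ => ?_
  split_ifs with hj
  · rw [Nat.sub_add_cancel (by omega)]
  · rfl

open Finset in
theorem prod_rowLen_mul_finprod_isRemovable {M : Type*} [CommMonoid M] (μ : YoungDiagram)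
    {x : ℕ} (hx : IsAddable μ (x, μ.rowLen x)) (T : ℕ × ℕ → M) :
    (∏ k ∈ range x, T (k, μ.rowLen k)) *
        ∏ᶠ c ∈ {c | IsRemovable μ c ∧ c.1 < x}, T (c.1 + 1, c.2 + 1) =
      (∏ᶠ c ∈ {c | IsAddable μ c ∧ c.1 < x}, T c) * ∏ k ∈ range x, T (k + 1, μ.rowLen k) := by
  have key := prod_colLen_mul_finprod_isRemovable μ.transpose (y := x)
    (by simpa [isAddable_transpose, YoungDiagram.colLen_transpose] using hx) (T ∘ Prod.swap)
  have hA : {c | IsAddable μ c ∧ c.1 < x} =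
      Prod.swap '' {c | IsAddable μ.transpose c ∧ c.2 < x} := by
    ext c
    simp [Set.image_swap_eq_preimage_swap, isAddable_transpose]
  have hR : {c | IsRemovable μ c ∧ c.1 < x} =
      Prod.swap '' {c | IsRemovable μ.transpose c ∧ c.2 < x} := by
    ext c
    simp [Set.image_swap_eq_preimage_swap, isRemovable_transpose]
  rw [hA, hR, finprod_mem_image Prod.swap_injective.injOn,
    finprod_mem_image Prod.swap_injective.injOn]
  simpa [YoungDiagram.colLen_transpose] using key

section Insert

variable {lam mu : YoungDiagram} {b : ℕ × ℕ}

lemma mem_of_cells_eq_insert (hmu : mu.cells = insert b lam.cells) {c : ℕ × ℕ} :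
    c ∈ mu ↔ c = b ∨ c ∈ lam := by
  rw [← YoungDiagram.mem_cells, hmu, Finset.mem_insert, YoungDiagram.mem_cells]

lemma isAddable_of_cells_eq_insert_iff {r : ℕ} (hr : r ≠ 1) (hb : IsAddable lam b)
    (hmu : mu.cells = insert b lam.cells) {c : ℕ × ℕ} (hc : cellColor r c = cellColor r b) :
    IsAddable mu c ↔ IsAddable lam c ∧ c ≠ b := by
  simp only [isAddable_iff_forall_lt, mem_of_cells_eq_insert hmu, not_or]
  constructor
  · rintro ⟨⟨hcb, hc'⟩, h⟩
    refine ⟨⟨hc', fun d hd => (h d hd).resolve_left ?_⟩, hcb⟩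
    rintro rfl
    obtain ⟨e, hbe, hec⟩ := exists_between_of_cellColor_eq hr hd hc.symm
    exact hb.1 (lam.isLowerSet hbe.le ((h e hec).resolve_left hbe.ne'))
  · rintro ⟨⟨hc', h⟩, hcb⟩
    exact ⟨⟨hcb, hc'⟩, fun d hd => Or.inr (h d hd)⟩

lemma isRemovable_of_cells_eq_insert_iff {r : ℕ} (hr : r ≠ 1) (hb : IsAddable lam b)
    (hmu : mu.cells = insert b lam.cells) {c : ℕ × ℕ} (hc : cellColor r c = cellColor r b) :
    IsRemovable mu c ↔ IsRemovable lam c ∨ c = b := by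
  simp only [isRemovable_iff_forall_gt, mem_of_cells_eq_insert hmu]
  constructor
  · rintro ⟨rfl | hc', h⟩
    · exact Or.inr rfl
    · exact Or.inl ⟨hc', fun d hd hd' => h d hd (Or.inr hd')⟩
  · rintro (⟨hc', h⟩ | rfl)
    · refine ⟨Or.inr hc', fun d hcd => ?_⟩
      rintro (rfl | hd)
      · obtain ⟨e, hce, heb⟩ := exists_between_of_cellColor_eq hr hcd hc
        exact h e hce ((isAddable_iff_forall_lt.mp hb).2 e heb)
      · exact h d hcd hd
    · refine ⟨Or.inl rfl, fun d hcd => ?_⟩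
      rintro (rfl | hd)
      · exact lt_irrefl _ hcd
      · exact hb.1 (lam.isLowerSet hcd.le hd)

lemma setOf_isAddable_of_cells_eq_insert {r : ℕ} (hr : r ≠ 1) (hb : IsAddable lam b)
    (hmu : mu.cells = insert b lam.cells) :
    {c | IsAddable mu c ∧ cellColor r c = cellColor r b} =
      {c | IsAddable lam c ∧ cellColor r c = cellColor r b} \ {b} := by
  ext c
  simp only [Set.mem_sdiff, Set.mem_ofPred_eq, Set.mem_singleton_iff]
  by_cases hc : cellColor r c = cellColor r b
  · simp [hc, isAddable_of_cells_eq_insert_iff hr hb hmu hc]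
  · simp [hc]

lemma setOf_isRemovable_of_cells_eq_insert {r : ℕ} (hr : r ≠ 1) (hb : IsAddable lam b)
    (hmu : mu.cells = insert b lam.cells) :
    {c | IsRemovable mu c ∧ cellColor r c = cellColor r b} =
      insert b {c | IsRemovable lam c ∧ cellColor r c = cellColor r b} := by
  ext c
  simp only [Set.mem_insert_iff, Set.mem_ofPred_eq]
  by_cases hc : cellColor r c = cellColor r b
  · simp [hc, isRemovable_of_cells_eq_insert_iff hr hb hmu hc, or_comm]
  · simp only [hc, and_false, or_false, false_iff]
    rintro rfl
    exact hc rfl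

lemma rowLen_of_cells_eq_insert {x y : ℕ} (hb : IsAddable lam (x, y))
    (hmu : mu.cells = insert (x, y) lam.cells) (k : ℕ) :
    mu.rowLen k = if k = x then y + 1 else lam.rowLen k := by
  have hy := (isAddable_iff_rowLen.mp hb).1
  refine eq_of_forall_lt_iff fun j => ?_
  rw [← YoungDiagram.mem_iff_lt_rowLen, mem_of_cells_eq_insert hmu, YoungDiagram.mem_iff_lt_rowLen]
  split_ifs with hk
  · simp only [hk, Prod.mk.injEq, true_and]
    omega
  · simp [hk]

lemma colLen_of_cells_eq_insert {x y : ℕ} (hb : IsAddable lam (x, y))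
    (hmu : mu.cells = insert (x, y) lam.cells) (j : ℕ) :
    mu.colLen j = if j = y then x + 1 else lam.colLen j := by
  have hx := (isAddable_iff_colLen.mp hb).1
  refine eq_of_forall_lt_iff fun i => ?_
  rw [← YoungDiagram.mem_iff_lt_colLen, mem_of_cells_eq_insert hmu, YoungDiagram.mem_iff_lt_colLen]
  split_ifs with hj
  · simp only [hj, Prod.mk.injEq, and_true]
    omega
  · simp [hj]

end Insert

noncomputable def hookTerm (r : ℕ) (μ : YoungDiagram) (c : ℕ × ℕ) : QT :=
  if r ∣ hook μ c then
    (1 - q ^ (arm μ c + 1) * t ^ (-(leg μ c : ℤ))) * (1 - q ^ (-(arm μ c : ℤ)) * t ^ (leg μ c + 1))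
  else 1

lemma normN_eq_prod_hookTerm (r : ℕ) (μ : YoungDiagram) :
    normN r μ = ∏ c ∈ μ.cells, hookTerm r μ c :=
  Finset.prod_filter _ _

noncomputable def cellTerm (r : ℕ) (b c : ℕ × ℕ) : QT :=
  if cellColor r c = cellColor r b then pairFactor (chi b) (chi c) else 1

lemma cellTerm_ne_zero {r : ℕ} {b d : ℕ × ℕ} (hb : d ≠ b) (hb' : d ≠ (b.1 + 1, b.2 + 1)) :
    cellTerm r b d ≠ 0 := by
  unfold cellTerm
  split_ifs
  exacts [pairFactor_chi_ne_zero hb hb', one_ne_zero]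

/-- The hypothesis `h` says that `χ_d = χ_b q^(-a) t^(l+1)` or `χ_d = χ_b q^(a+1) t^(-l)`, the two
monomials of the hook factor. -/
lemma hookFactor_eq_pairFactor {a l : ℕ} {b d : ℕ × ℕ}
    (h : d.2 + a = b.2 ∧ d.1 = b.1 + l + 1 ∨ d.2 = b.2 + a + 1 ∧ d.1 + l = b.1) :
    (1 - q ^ (a + 1) * t ^ (-(l : ℤ))) * (1 - q ^ (-(a : ℤ)) * t ^ (l + 1)) =
      pairFactor (chi b) (chi d) := by
  obtain ⟨b1, b2⟩ := b
  obtain ⟨d1, d2⟩ := d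
  have := q_ne_zero
  have := t_ne_zero
  simp only at h
  rcases h with ⟨rfl, rfl⟩ | ⟨rfl, rfl⟩ <;>
  · simp only [pairFactor, chi, zpow_neg, zpow_natCast]
    field_simp
    ring

lemma dvd_hook_iff_cellColor_eq {r a l : ℕ} {b d : ℕ × ℕ}
    (h : d.2 + a = b.2 ∧ d.1 = b.1 + l + 1 ∨ d.2 = b.2 + a + 1 ∧ d.1 + l = b.1) :
    r ∣ a + l + 1 ↔ cellColor r d = cellColor r b := by
  rw [cellColor_eq_iff, ← Int.natCast_dvd_natCast]
  rcases h with ⟨h2, h1⟩ | ⟨h2, h1⟩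
  · rw [show ((b.1 : ℤ) - b.2) - (d.1 - d.2) = -((a + l + 1 : ℕ) : ℤ) by omega, dvd_neg]
  · rw [show ((b.1 : ℤ) - b.2) - (d.1 - d.2) = ((a + l + 1 : ℕ) : ℤ) by omega]

lemma hookTerm_eq_cellTerm {r : ℕ} {μ : YoungDiagram} {c b d : ℕ × ℕ}
    (h : d.2 + arm μ c = b.2 ∧ d.1 = b.1 + leg μ c + 1 ∨
      d.2 = b.2 + arm μ c + 1 ∧ d.1 + leg μ c = b.1) :
    hookTerm r μ c = cellTerm r b d := by
  simp only [hookTerm, cellTerm, hook, dvd_hook_iff_cellColor_eq h, hookFactor_eq_pairFactor h]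

lemma normN_ne_zero (r : ℕ) (μ : YoungDiagram) : normN r μ ≠ 0 := by
  refine Finset.prod_ne_zero_iff.mpr fun c _ => ?_
  rw [hookFactor_eq_pairFactor (b := (0, arm μ c)) (d := (leg μ c + 1, 0)) (by simp)]
  exact pairFactor_chi_ne_zero (by simp) (by simp)

lemma hookTerm_row_of_cells_eq_insert {r : ℕ} {lam mu : YoungDiagram} {x y : ℕ}
    (hb : IsAddable lam (x, y)) (hmu : mu.cells = insert (x, y) lam.cells) {j : ℕ} (hj : j < y) :
    hookTerm r mu (x, j) = cellTerm r (x, y) (lam.colLen j, j) := by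
  have := lt_colLen_of_isAddable hb hj
  refine hookTerm_eq_cellTerm (Or.inl ⟨?_, ?_⟩) <;>
    simp only [arm, leg, rowLen_of_cells_eq_insert hb hmu, colLen_of_cells_eq_insert hb hmu,
      hj.ne, ↓reduceIte] <;> omega

lemma hookTerm_col_of_cells_eq_insert {r : ℕ} {lam mu : YoungDiagram} {x y : ℕ}
    (hb : IsAddable lam (x, y)) (hmu : mu.cells = insert (x, y) lam.cells) {k : ℕ} (hk : k < x) :
    hookTerm r mu (k, y) = cellTerm r (x, y) (k, lam.rowLen k) := by
  have := lt_rowLen_of_isAddable hb hk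
  refine hookTerm_eq_cellTerm (Or.inr ⟨?_, ?_⟩) <;>
    simp only [arm, leg, rowLen_of_cells_eq_insert hb hmu, colLen_of_cells_eq_insert hb hmu,
      hk.ne, ↓reduceIte] <;> omega

lemma hookTerm_row_of_isAddable {r : ℕ} {lam : YoungDiagram} {x y j : ℕ}
    (hb : IsAddable lam (x, y)) (hj : j < y) :
    hookTerm r lam (x, j) = cellTerm r (x, y) (lam.colLen j, j + 1) := by
  have := lt_colLen_of_isAddable hb hj
  have hy := (isAddable_iff_rowLen.mp hb).1
  refine hookTerm_eq_cellTerm (Or.inl ⟨?_, ?_⟩) <;> simp only [arm, leg] <;> omega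

lemma hookTerm_col_of_isAddable {r : ℕ} {lam : YoungDiagram} {x y k : ℕ}
    (hb : IsAddable lam (x, y)) (hk : k < x) :
    hookTerm r lam (k, y) = cellTerm r (x, y) (k + 1, lam.rowLen k) := by
  have := lt_rowLen_of_isAddable hb hk
  have hx := (isAddable_iff_colLen.mp hb).1
  refine hookTerm_eq_cellTerm (Or.inr ⟨?_, ?_⟩) <;> simp only [arm, leg] <;> omega

open Finset in
theorem normN_mul_prod_cellTerm_eq {r : ℕ} (hr : r ≠ 1) {lam mu : YoungDiagram} {x y : ℕ}
    (hb : IsAddable lam (x, y)) (hmu : mu.cells = insert (x, y) lam.cells) :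
    normN r mu * ((∏ j ∈ range y, cellTerm r (x, y) (lam.colLen j, j + 1)) *
        ∏ k ∈ range x, cellTerm r (x, y) (k + 1, lam.rowLen k)) =
      normN r lam * ((∏ j ∈ range y, cellTerm r (x, y) (lam.colLen j, j)) *
        ∏ k ∈ range x, cellTerm r (x, y) (k, lam.rowLen k)) := by
  have hrow := rowLen_of_cells_eq_insert hb hmu
  have hcol := colLen_of_cells_eq_insert hb hmu
  have hcorner : hookTerm r mu (x, y) = 1 := by
    have : hook mu (x, y) = 1 := by simp [hook, arm, leg, hrow, hcol]
    rw [hookTerm, this, if_neg (mt Nat.dvd_one.mp hr)]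
  have hrest : ∀ c ∈ lam.cells.filter fun c => ¬(c.1 = x ∨ c.2 = y),
      hookTerm r mu c = hookTerm r lam c := by
    intro c hc
    obtain ⟨h1, h2⟩ := not_or.mp (mem_filter.mp hc).2
    simp [hookTerm, hook, arm, leg, hrow, hcol, h1, h2]
  rw [normN_eq_prod_hookTerm r mu, hmu, prod_insert hb.1, hcorner, one_mul,
    prod_cells_eq_prod_row_mul_prod_col hb, normN_eq_prod_hookTerm,
    prod_cells_eq_prod_row_mul_prod_col hb, prod_congr rfl hrest,
    prod_congr rfl fun j hj => hookTerm_row_of_cells_eq_insert hb hmu (mem_range.mp hj),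
    prod_congr rfl fun k hk => hookTerm_col_of_cells_eq_insert hb hmu (mem_range.mp hk),
    prod_congr rfl fun j hj => hookTerm_row_of_isAddable hb (mem_range.mp hj),
    prod_congr rfl fun k hk => hookTerm_col_of_isAddable hb (mem_range.mp hk)]
  ring

open Finset in
theorem normN_mul_finprod_isRemovable_eq {r : ℕ} (hr : r ≠ 1) {lam mu : YoungDiagram} {b : ℕ × ℕ}
    (hb : IsAddable lam b) (hmu : mu.cells = insert b lam.cells) :
    normN r mu * ∏ᶠ c ∈ {c | IsRemovable lam c}, cellTerm r b (c.1 + 1, c.2 + 1) =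
      normN r lam * ∏ᶠ c ∈ {c | IsAddable lam c} \ {b}, cellTerm r b c := by
  obtain ⟨x, y⟩ := b
  rw [finprod_isRemovable_eq hb, finprod_isAddable_sdiff_eq hb]
  have hleft := prod_colLen_mul_finprod_isRemovable lam (y := y)
    (by rwa [← (isAddable_iff_colLen.mp hb).1]) (cellTerm r (x, y))
  have htop := prod_rowLen_mul_finprod_isRemovable lam (x := x)
    (by rwa [← (isAddable_iff_rowLen.mp hb).1]) (cellTerm r (x, y))
  have hnorm := normN_mul_prod_cellTerm_eq hr hb hmu
  set Il := ∏ j ∈ range y, cellTerm r (x, y) (lam.colLen j, j + 1)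
  set It := ∏ k ∈ range x, cellTerm r (x, y) (k + 1, lam.rowLen k)
  set Ot := ∏ k ∈ range x, cellTerm r (x, y) (k, lam.rowLen k)
  set Rl := ∏ᶠ c ∈ {c | IsRemovable lam c ∧ c.2 < y}, cellTerm r (x, y) (c.1 + 1, c.2 + 1)
  set Rt := ∏ᶠ c ∈ {c | IsRemovable lam c ∧ c.1 < x}, cellTerm r (x, y) (c.1 + 1, c.2 + 1)
  set Al := ∏ᶠ c ∈ {c | IsAddable lam c ∧ c.2 < y}, cellTerm r (x, y) c
  have hinner : Il * It ≠ 0 := by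
    refine mul_ne_zero (prod_ne_zero_iff.mpr fun j hj => ?_) (prod_ne_zero_iff.mpr fun k hk => ?_)
    · have hj := mem_range.mp hj
      have := lt_colLen_of_isAddable hb hj
      exact cellTerm_ne_zero (by simp only [ne_eq, Prod.mk.injEq]; omega)
        (by simp only [ne_eq, Prod.mk.injEq]; omega)
    · have hk := mem_range.mp hk
      have := lt_rowLen_of_isAddable hb hk
      exact cellTerm_ne_zero (by simp only [ne_eq, Prod.mk.injEq]; omega)
        (by simp only [ne_eq, Prod.mk.injEq]; omega)
  refine mul_right_cancel₀ hinner ?_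
  linear_combination Rl * Rt * hnorm + normN r lam * Ot * Rt * hleft +
    normN r lam * Al * Il * htop

theorem normN_mul_finprod_pairFactor_eq {r : ℕ} (hr : r ≠ 1) {lam mu : YoungDiagram} {b : ℕ × ℕ}
    (hb : IsAddable lam b) (hmu : mu.cells = insert b lam.cells) :
    normN r mu * ∏ᶠ c ∈ {c | IsRemovable lam c ∧ cellColor r c = cellColor r b},
        pairFactor (chi c) (chi b) =
      normN r lam * ∏ᶠ c ∈ {c | IsAddable mu c ∧ cellColor r c = cellColor r b},
        pairFactor (chi b) (chi c) := by
  have hshift (c : ℕ × ℕ) : cellTerm r b (c.1 + 1, c.2 + 1) =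
      if cellColor r c = cellColor r b then pairFactor (chi c) (chi b) else 1 := by
    rw [cellTerm, cellColor_add_one_add_one, chi_add_one_add_one, pairFactor_qt_mul]
  have hA : {c | IsAddable mu c ∧ cellColor r c = cellColor r b} =
      {c | c ∈ {c | IsAddable lam c} \ {b} ∧ cellColor r c = cellColor r b} := by
    rw [setOf_isAddable_of_cells_eq_insert hr hb hmu]
    ext c
    simp only [Set.mem_sdiff, Set.mem_ofPred_eq, Set.mem_singleton_iff]
    tauto
  have key := normN_mul_finprod_isRemovable_eq hr hb hmu
  rw [finprod_mem_congr rfl fun c _ => hshift c, finprod_mem_ite] at key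
  simp only [cellTerm, finprod_mem_ite] at key
  rw [hA]
  exact key

theorem norm_ratio_cancellation_mul {r : ℕ} (hr : r ≠ 1) {lam mu : YoungDiagram} {b : ℕ × ℕ}
    (hb : IsAddable lam b) (hmu : mu.cells = insert b lam.cells) :
    normN r mu * (∏ᶠ c ∈ {c | IsRemovable mu c ∧ cellColor r c = cellColor r b},
        (1 - q * t * chi c / chi b)) *
        ∏ᶠ c ∈ {c | IsRemovable lam c ∧ cellColor r c = cellColor r b}, (1 - chi b / chi c) =
      normN r lam * (∏ᶠ c ∈ {c | IsAddable lam c ∧ cellColor r c = cellColor r b},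
        (1 - q * t * chi b / chi c)) *
        ∏ᶠ c ∈ {c | IsAddable mu c ∧ cellColor r c = cellColor r b}, (1 - chi c / chi b) := by
  rw [setOf_isRemovable_of_cells_eq_insert hr hb hmu,
    ← Set.insert_sdiff_self_of_mem
      (show b ∈ {c | IsAddable lam c ∧ cellColor r c = cellColor r b} from ⟨hb, rfl⟩),
    ← setOf_isAddable_of_cells_eq_insert hr hb hmu]
  set Amu := {c | IsAddable mu c ∧ cellColor r c = cellColor r b}
  set Rlam := {c | IsRemovable lam c ∧ cellColor r c = cellColor r b}
  have hAfin : Amu.Finite := (setOf_isAddable_finite mu).subset fun _ h => h.1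
  have hRfin : Rlam.Finite := (setOf_isRemovable_finite lam).subset fun _ h => h.1
  have hbA : b ∉ Amu := fun h => h.1.1 ((mem_of_cells_eq_insert hmu).mpr (Or.inl rfl))
  have hbR : b ∉ Rlam := fun h => hb.1 h.1.1
  have key := normN_mul_finprod_pairFactor_eq hr hb hmu
  simp only [pairFactor] at key
  rw [finprod_mem_mul_distrib hRfin, finprod_mem_mul_distrib hAfin] at key
  rw [finprod_mem_insert _ hbR hRfin, finprod_mem_insert _ hbA hAfin]
  linear_combination (1 - q * t * chi b / chi b) * key

/-- The hook cancellation identity (Lemma on `N_{λ∪■}/N_λ`). -/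
theorem norm_ratio_cancellation (r : ℕ) (hr : 2 ≤ r)
    (lam mu : YoungDiagram) (b : ℕ × ℕ) (hb : IsAddable lam b)
    (hmu : mu.cells = insert b lam.cells) (i : ZMod r)
    (hcol : cellColor r b = i) :
    (normN r mu / normN r lam) *
        ((∏ᶠ c ∈ {c | IsRemovable mu c ∧ cellColor r c = i},
            (1 - q * t * chi c / chi b)) /
          ∏ᶠ c ∈ {c | IsAddable mu c ∧ cellColor r c = i},
            (1 - chi c / chi b)) =
      (∏ᶠ c ∈ {c | IsAddable lam c ∧ cellColor r c = i},
          (1 - q * t * chi b / chi c)) /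
        ∏ᶠ c ∈ {c | IsRemovable lam c ∧ cellColor r c = i},
          (1 - chi b / chi c) := by
  subst hcol
  have hr1 : r ≠ 1 := by omega
  have hN : normN r lam ≠ 0 := normN_ne_zero r lam
  have hA : ∏ᶠ c ∈ {c | IsAddable mu c ∧ cellColor r c = cellColor r b},
      (1 - chi c / chi b) ≠ 0 := by
    refine finprod_mem_induction (· ≠ 0) one_ne_zero (fun _ _ => mul_ne_zero)
      fun _ hc => one_sub_chi_div_ne_zero ?_
    rintro rfl
    exact hc.1.1 ((mem_of_cells_eq_insert hmu).mpr (Or.inl rfl))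
  have hR : ∏ᶠ c ∈ {c | IsRemovable lam c ∧ cellColor r c = cellColor r b},
      (1 - chi b / chi c) ≠ 0 := by
    refine finprod_mem_induction (· ≠ 0) one_ne_zero (fun _ _ => mul_ne_zero)
      fun _ hc => one_sub_chi_div_ne_zero ?_
    rintro rfl
    exact hb.1 hc.1.1
  field_simp
  linear_combination norm_ratio_cancellation_mul hr1 hb hmu
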